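/- arXiv:1504.03275 — 3 statements merged into one kernel-verified Lean document; each statement's English description precedes it below -/
import Mathlib

section
/- Let n ≥ 1 be an integer, θ ∈ (0,1), c ≥ 1 an integer, and S a nonempty subset of {1,…,n}. The function f_S : ℝ^n → ℝ defined by f_S(p) = 1 / (1 − θ(1 − Σ_{i∈S} p_i)^c) is convex on the standard simplex {p ∈ ℝ^n : p_i ≥ 0 for all i, Σ_{i=1}^n p_i = 1}. -/
/-!
The map `p ↦ 1 - p(S)` is affine and takes values in `[0, 1]` on the simplex, so its `c`-th
power is convex and the denominator `1 - θ (1 - p(S))^c` is concave and at least `1 - θ > 0`.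
The reciprocal of a positive concave function is convex, because `t ↦ t⁻¹` is convex and
antitone on `(0, ∞)`.
-/

open Set Finset

section

variable {𝕜 E : Type*} [Field 𝕜] [LinearOrder 𝕜] [IsStrictOrderedRing 𝕜]
  [AddCommGroup E] [Module 𝕜 E] {s : Set E} {f : E → 𝕜}

theorem ConcaveOn.convexOn_inv (hf : ConcaveOn 𝕜 s f) (hf₀ : ∀ x ∈ s, 0 < f x) :
    ConvexOn 𝕜 s fun x => (f x)⁻¹ := by
  refine ⟨hf.1, fun x hx y hy a b ha hb hab => ?_⟩
  have hcomb : 0 < a • f x + b • f y := convex_Ioi 0 (hf₀ x hx) (hf₀ y hy) ha hb hab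
  calc (f (a • x + b • y))⁻¹ ≤ (a • f x + b • f y)⁻¹ := inv_anti₀ hcomb (hf.2 hx hy ha hb hab)
    _ ≤ a • (f x)⁻¹ + b • (f y)⁻¹ := by
      simpa only [zpow_neg_one] using
        (convexOn_zpow (-1)).2 (hf₀ x hx) (hf₀ y hy) ha hb hab

theorem ConvexOn.concaveOn_one_sub_mul_pow (hf : ConvexOn 𝕜 s f) (hf₀ : ∀ x ∈ s, 0 ≤ f x)
    {θ : 𝕜} (hθ : 0 ≤ θ) (c : ℕ) : ConcaveOn 𝕜 s fun x => 1 - θ * f x ^ c :=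
  (concaveOn_const 1 hf.1).sub ((hf.pow (fun x hx => hf₀ x hx) c).smul hθ)

end

theorem sum_mem_Icc_of_mem_stdSimplex {𝕜 ι : Type*} [Fintype ι] [Semiring 𝕜] [PartialOrder 𝕜]
    [IsOrderedRing 𝕜] {p : ι → 𝕜} (hp : p ∈ stdSimplex 𝕜 ι) (S : Finset ι) :
    ∑ i ∈ S, p i ∈ Set.Icc 0 1 :=
  ⟨sum_nonneg fun i _ => hp.1 i,
    hp.2 ▸ sum_le_sum_of_subset_of_nonneg (subset_univ S) fun i _ _ => hp.1 i⟩

theorem stmt2_general (n : ℕ) (θ : ℝ) (hθ : θ ∈ Set.Ioo (0 : ℝ) 1)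
    (c : ℕ) (S : Finset (Fin n)) :
    ConvexOn ℝ (stdSimplex ℝ (Fin n))
      (fun p : Fin n → ℝ => 1 / (1 - θ * (1 - ∑ i ∈ S, p i) ^ c)) := by
  have hsum := fun p (hp : p ∈ stdSimplex ℝ (Fin n)) => sum_mem_Icc_of_mem_stdSimplex hp S
  have hconvex : ConvexOn ℝ (stdSimplex ℝ (Fin n)) fun p => 1 - ∑ i ∈ S, p i := by
    refine ((convexOn_const 1 (convex_stdSimplex ℝ (Fin n))).sub
      ((∑ i ∈ S, LinearMap.proj i : (Fin n → ℝ) →ₗ[ℝ] ℝ).concaveOn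
        (convex_stdSimplex ℝ _))).congr fun p _ => ?_
    simp
  have hnonneg : ∀ p ∈ stdSimplex ℝ (Fin n), 0 ≤ 1 - ∑ i ∈ S, p i := fun p hp => by
    linarith [(hsum p hp).2]
  have hpos : ∀ p ∈ stdSimplex ℝ (Fin n), 0 < 1 - θ * (1 - ∑ i ∈ S, p i) ^ c := fun p hp => by
    have : (1 - ∑ i ∈ S, p i) ^ c ≤ 1 := pow_le_one₀ (hnonneg p hp) (by linarith [(hsum p hp).1])
    nlinarith [hθ.1, hθ.2]
  simpa only [one_div] using
    ((hconvex.concaveOn_one_sub_mul_pow hnonneg hθ.1.le c).convexOn_inv hpos)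

/-- For `θ ∈ (0,1)`, integer `c ≥ 1` and a nonempty subset `S` of `{1,…,n}`,
the function `f_S(p) = 1/(1 − θ(1 − Σ_{i∈S} p_i)^c)` is convex on the standard simplex. -/
theorem stmt2 (n : ℕ) (hn : 1 ≤ n) (θ : ℝ) (hθ : θ ∈ Set.Ioo (0 : ℝ) 1)
    (c : ℕ) (hc : 1 ≤ c) (S : Finset (Fin n)) (hS : S.Nonempty) :
    ConvexOn ℝ (stdSimplex ℝ (Fin n))
      (fun p : Fin n → ℝ => 1 / (1 - θ * (1 - ∑ i ∈ S, p i) ^ c)) :=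
  stmt2_general n θ hθ c S
end

section
/- Let n ≥ 1 be an integer, θ ∈ (0,1), c ≥ 1 an integer, F a finite family of nonempty subsets of {1,…,n}, and π : F → ℝ with π(S) > 0 for all S ∈ F. The function cost_θ(p) = Σ_{S∈F} π(S) / (1 − θ(1 − p(S))^c) is convex on the standard simplex {p ∈ ℝ^n : p_i ≥ 0 for all i, Σ_{i=1}^n p_i = 1}. -/
/-!
Each summand is `π S * g (1 - p(S))` with `g x = (1 - θ x^c)⁻¹`. On `[0, 1]` the map
`x ↦ 1 - θ x^c` is concave and, as `θ < 1`, positive, while `y ↦ y⁻¹` is convex and antitone on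
`(0, ∞)`; hence `g` is convex on `[0, 1]`. The affine map `p ↦ 1 - p(S)` sends the simplex into
`[0, 1]`, so each summand is convex, and so is their sum.
-/

open Set

theorem ConvexOn.sum {𝕜 E β ι : Type*} [Semiring 𝕜] [PartialOrder 𝕜] [AddCommMonoid E]
    [AddCommMonoid β] [PartialOrder β] [IsOrderedAddMonoid β] [SMul 𝕜 E] [Module 𝕜 β]
    {s : Set E} (hs : Convex 𝕜 s) {t : Finset ι} {f : ι → E → β}
    (h : ∀ i ∈ t, ConvexOn 𝕜 s (f i)) : ConvexOn 𝕜 s (fun x => ∑ i ∈ t, f i x) := by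
  classical
  induction t using Finset.induction_on with
  | empty => simpa using convexOn_const 0 hs
  | insert i t hi ih =>
    simp only [Finset.sum_insert hi]
    exact (h i (t.mem_insert_self i)).add (ih fun j hj => h j (Finset.mem_insert_of_mem hj))

theorem convexOn_inv_one_sub_mul_pow {θ : ℝ} (hθ₀ : 0 ≤ θ) (hθ₁ : θ < 1) (c : ℕ) :
    ConvexOn ℝ (Icc 0 1) (fun x : ℝ => (1 - θ * x ^ c)⁻¹) := by
  set D := fun x : ℝ => 1 - θ * x ^ c
  have hD : ConcaveOn ℝ (Icc 0 1) D :=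
    (concaveOn_const 1 (convex_Icc 0 1)).sub
      (((convexOn_pow c).subset Icc_subset_Ici_self (convex_Icc 0 1)).smul hθ₀)
  have hD_pos : D '' Icc 0 1 ⊆ Ioi 0 := by
    rintro _ ⟨x, ⟨hx₀, hx₁⟩, rfl⟩
    have : θ * x ^ c ≤ θ := mul_le_of_le_one_right hθ₀ (pow_le_one₀ hx₀ hx₁)
    simp only [D, mem_Ioi]
    linarith
  have hinv : ConvexOn ℝ (Ioi 0) (fun y : ℝ => y⁻¹) := by
    simpa using convexOn_zpow (𝕜 := ℝ) (-1)
  have hD_image : Convex ℝ (D '' Icc 0 1) :=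
    (isPreconnected_Icc.image D (by fun_prop)).convex
  exact (hinv.subset hD_pos hD_image).comp_concaveOn hD
    fun y hy z hz hyz => inv_anti₀ (hD_pos hy) hyz

theorem ConvexOn.comp_one_sub_sum {ι : Type*} {g : ℝ → ℝ} {t : Set ℝ} (hg : ConvexOn ℝ t g)
    (S : Finset ι) :
    ConvexOn ℝ ((fun p : ι → ℝ => 1 - ∑ i ∈ S, p i) ⁻¹' t) (fun p => g (1 - ∑ i ∈ S, p i)) := by
  let L : (ι → ℝ) →ᵃ[ℝ] ℝ :=
    AffineMap.const ℝ (ι → ℝ) (1 : ℝ) - (∑ i ∈ S, LinearMap.proj i).toAffineMap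
  have hL : ⇑L = fun p : ι → ℝ => 1 - ∑ i ∈ S, p i := by
    ext p; simp [L]
  have hgL := hg.comp_affineMap L
  rwa [hL] at hgL

theorem one_sub_sum_mem_Icc_of_mem_stdSimplex {ι : Type*} [Fintype ι] {p : ι → ℝ}
    (hp : p ∈ stdSimplex ℝ ι) (S : Finset ι) : 1 - ∑ i ∈ S, p i ∈ Icc 0 1 := by
  have h₀ : 0 ≤ ∑ i ∈ S, p i := Finset.sum_nonneg fun i _ => hp.1 i
  have h₁ : ∑ i ∈ S, p i ≤ 1 :=
    hp.2 ▸ Finset.sum_le_sum_of_subset_of_nonneg S.subset_univ fun i _ _ => hp.1 i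
  constructor <;> linarith

theorem stmt3_general (n : ℕ) (θ : ℝ) (hθ : θ ∈ Set.Ioo (0 : ℝ) 1)
    (c : ℕ) (F : Finset (Finset (Fin n)))
    (π : Finset (Fin n) → ℝ) (hπ : ∀ S ∈ F, 0 < π S) :
    ConvexOn ℝ (stdSimplex ℝ (Fin n))
      (fun p : Fin n → ℝ => ∑ S ∈ F, π S / (1 - θ * (1 - ∑ i ∈ S, p i) ^ c)) := by
  refine ConvexOn.sum (convex_stdSimplex ℝ _) fun S hS => ?_
  have hterm := ((convexOn_inv_one_sub_mul_pow hθ.1.le hθ.2 c).comp_one_sub_sum S).subset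
    (fun p hp => one_sub_sum_mem_Icc_of_mem_stdSimplex hp S) (convex_stdSimplex ℝ _)
  simpa [div_eq_mul_inv] using hterm.smul (hπ S hS).le

/-- The cost function
`cost_θ(p) = Σ_{S∈F} π(S) / (1 − θ(1 − p(S))^c)` is convex on the standard simplex. -/
theorem stmt3 (n : ℕ) (hn : 1 ≤ n) (θ : ℝ) (hθ : θ ∈ Set.Ioo (0 : ℝ) 1)
    (c : ℕ) (hc : 1 ≤ c) (F : Finset (Finset (Fin n)))
    (hF : ∀ S ∈ F, S.Nonempty)
    (π : Finset (Fin n) → ℝ) (hπ : ∀ S ∈ F, 0 < π S) :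
    ConvexOn ℝ (stdSimplex ℝ (Fin n))
      (fun p : Fin n → ℝ => ∑ S ∈ F, π S / (1 - θ * (1 - ∑ i ∈ S, p i) ^ c)) :=
  stmt3_general n θ hθ c F π hπ
end

section
/- Let n ≥ 1 be an integer, θ ∈ (0,1), c ≥ 1 an integer, F a finite family of nonempty subsets of {1,…,n}, and π : F → ℝ with π(S) > 0 for all S ∈ F. If a schedule p is a local minimum of cost_θ on the standard simplex (i.e., there is a neighborhood U of p such that cost_θ(p) ≤ cost_θ(q) for every schedule q ∈ U), then p is a global minimum: cost_θ(p) ≤ cost_θ(q) for every schedule q. -/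
open Set

lemma aux_concave_inv {E : Type*} [AddCommGroup E] [Module ℝ E] {s : Set E} {f : E → ℝ}
    (hf : ConcaveOn ℝ s f) (hpos : ∀ x ∈ s, 0 < f x) :
    ConvexOn ℝ s (fun x => 1 / f x) := by
  refine ⟨hf.1, fun x hx y hy a b ha hb hab => ?_⟩
  have hz := hf.2 hx hy ha hb hab
  have hmem : a • x + b • y ∈ s := hf.1 hx hy ha hb hab
  have hfz : 0 < f (a • x + b • y) := hpos _ hmem
  have hfx : 0 < f x := hpos _ hx
  have hfy : 0 < f y := hpos _ hy
  simp only [smul_eq_mul] at hz ⊢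
  rw [div_le_iff₀ hfz]
  have key : f x * f y ≤ (a * (1 / f x) + b * (1 / f y)) * (a * f x + b * f y) * (f x * f y) := by
    have h1 : (a * (1 / f x) + b * (1 / f y)) * (a * f x + b * f y) * (f x * f y)
        = (a * f y + b * f x) * (a * f x + b * f y) := by
      field_simp
    rw [h1]
    have hb1 : b = 1 - a := by linarith
    subst hb1
    nlinarith [mul_nonneg (mul_nonneg ha (by linarith : (0:ℝ) ≤ 1 - a)) (sq_nonneg (f x - f y))]
  have h2 : 0 ≤ a * (1 / f x) + b * (1 / f y) := by positivity
  calc (1:ℝ) = f x * f y / (f x * f y) := by field_simp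
    _ ≤ (a * (1 / f x) + b * (1 / f y)) * (a * f x + b * f y) := by
        rw [div_le_iff₀ (by positivity)]; linarith [key]
    _ ≤ (a * (1 / f x) + b * (1 / f y)) * f (a • x + b • y) := by
        apply mul_le_mul_of_nonneg_left hz h2

lemma aux_convexOn_sum {ι E : Type*} [AddCommGroup E] [Module ℝ E] {s : Set E}
    (hs : Convex ℝ s) (t : Finset ι) (f : ι → E → ℝ)
    (h : ∀ i ∈ t, ConvexOn ℝ s (f i)) :
    ConvexOn ℝ s (fun x => ∑ i ∈ t, f i x) := by
  classical
  induction t using Finset.induction with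
  | empty => simpa using convexOn_const 0 hs
  | @insert a tt hi ih =>
    simp only [Finset.sum_insert hi]
    exact (h a (Finset.mem_insert_self _ _)).add
      (ih fun i hit => h i (Finset.mem_insert_of_mem hit))

/-- Any schedule that is a local minimum of the cost function
`cost_θ` on the standard simplex is a global minimum over the simplex. -/
theorem stmt5 (n : ℕ) (hn : 1 ≤ n) (θ : ℝ) (hθ : θ ∈ Set.Ioo (0 : ℝ) 1)
    (c : ℕ) (hc : 1 ≤ c) (F : Finset (Finset (Fin n)))
    (hF : ∀ S ∈ F, S.Nonempty)
    (π : Finset (Fin n) → ℝ) (hπ : ∀ S ∈ F, 0 < π S)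
    (cost : (Fin n → ℝ) → ℝ)
    (hcost : ∀ p, cost p = ∑ S ∈ F, π S / (1 - θ * (1 - ∑ i ∈ S, p i) ^ c))
    (p : Fin n → ℝ) (hp : p ∈ stdSimplex ℝ (Fin n))
    (hloc : ∃ U ∈ nhds p, ∀ q ∈ U, q ∈ stdSimplex ℝ (Fin n) → cost p ≤ cost q) :
    ∀ q ∈ stdSimplex ℝ (Fin n), cost p ≤ cost q := by
  obtain ⟨hθ0, hθ1⟩ := hθ
  set s := stdSimplex ℝ (Fin n)
  have hsconv : Convex ℝ s := convex_stdSimplex ℝ (Fin n)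
  -- basic facts on the simplex
  have hsum01 : ∀ S : Finset (Fin n), ∀ r ∈ s, (1 - ∑ i ∈ S, r i) ∈ Set.Icc (0:ℝ) 1 := by
    intro S r hr
    have h0 : (0:ℝ) ≤ ∑ i ∈ S, r i := Finset.sum_nonneg fun i _ => hr.1 i
    have h1 : ∑ i ∈ S, r i ≤ ∑ i ∈ Finset.univ, r i :=
      Finset.sum_le_sum_of_subset_of_nonneg (Finset.subset_univ S) (fun i _ _ => hr.1 i)
    constructor <;> [linarith [hr.2 ▸ h1]; linarith]
  have hupos : ∀ S : Finset (Fin n), ∀ r ∈ s, 0 < 1 - θ * (1 - ∑ i ∈ S, r i) ^ c := by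
    intro S r hr
    obtain ⟨h0, h1⟩ := hsum01 S r hr
    have hpow : (1 - ∑ i ∈ S, r i) ^ c ≤ 1 := pow_le_one₀ h0 h1
    have hpow0 : 0 ≤ (1 - ∑ i ∈ S, r i) ^ c := pow_nonneg h0 c
    nlinarith
  -- convexity of cost
  have hconv : ConvexOn ℝ s cost := by
    have : cost = fun r => ∑ S ∈ F, π S / (1 - θ * (1 - ∑ i ∈ S, r i) ^ c) := funext hcost
    rw [this]
    refine aux_convexOn_sum hsconv F _ (fun S hS => ?_)
    have hconc : ConcaveOn ℝ s (fun r => 1 - θ * (1 - ∑ i ∈ S, r i) ^ c) := by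
      refine ⟨hsconv, fun x hx y hy a b ha hb hab => ?_⟩
      have hsumz : ∑ i ∈ S, (a • x + b • y) i = a * ∑ i ∈ S, x i + b * ∑ i ∈ S, y i := by
        simp [Finset.sum_add_distrib, Finset.mul_sum]
      have hx0 : (1 - ∑ i ∈ S, x i) ∈ Set.Ici (0:ℝ) := (hsum01 S x hx).1
      have hy0 : (1 - ∑ i ∈ S, y i) ∈ Set.Ici (0:ℝ) := (hsum01 S y hy).1
      have hpow := (convexOn_pow (𝕜 := ℝ) c).2 hx0 hy0 ha hb hab
      simp only [smul_eq_mul] at hpow ⊢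
      have heq : 1 - ∑ i ∈ S, (a • x + b • y) i
          = a * (1 - ∑ i ∈ S, x i) + b * (1 - ∑ i ∈ S, y i) := by
        rw [hsumz]; ring_nf; linarith
      rw [heq]
      nlinarith [hpow]
    have hsm := (aux_concave_inv hconc (hupos S)).smul (le_of_lt (hπ S hS))
    have hfun : (fun (r : Fin n → ℝ) => π S / (1 - θ * (1 - ∑ i ∈ S, r i) ^ c))
        = fun (x : Fin n → ℝ) => π S • (1 / (1 - θ * (1 - ∑ i ∈ S, x i) ^ c)) := by
      funext r; rw [smul_eq_mul, mul_one_div]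
    exact hfun ▸ hsm
  -- local to global
  obtain ⟨U, hU, hUmin⟩ := hloc
  intro q hq
  obtain ⟨ε, hε, hball⟩ := Metric.mem_nhds_iff.mp hU
  by_cases hpq : q = p
  · rw [hpq]
  · have hd : 0 < dist q p := dist_pos.mpr hpq
    set t : ℝ := min 1 (ε / (2 * dist q p)) with ht_def
    have ht0 : 0 < t := lt_min one_pos (by positivity)
    have ht1 : t ≤ 1 := min_le_left _ _
    set z := (1 - t) • p + t • q with hz_def
    have hzs : z ∈ s := hsconv hp hq (by linarith) ht0.le (by ring)
    have hdist : dist z p < ε := by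
      have hzp : z - p = t • (q - p) := by
        rw [hz_def]; module
      rw [dist_eq_norm, hzp, norm_smul, Real.norm_eq_abs, abs_of_pos ht0]
      have : t ≤ ε / (2 * dist q p) := min_le_right _ _
      have h2 : t * dist q p ≤ ε / 2 := by
        calc t * dist q p ≤ ε / (2 * dist q p) * dist q p :=
              mul_le_mul_of_nonneg_right this dist_nonneg
          _ = ε / 2 := by field_simp
      calc t * ‖q - p‖ = t * dist q p := by rw [dist_eq_norm]
        _ ≤ ε / 2 := h2
        _ < ε := by linarith
    have hle : cost p ≤ cost z := hUmin z (hball (Metric.mem_ball.mpr hdist)) hzs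
    have hcz : cost z ≤ (1 - t) * cost p + t * cost q := by
      have := hconv.2 hp hq (by linarith : (0:ℝ) ≤ 1 - t) ht0.le (by ring)
      simpa [hz_def, smul_eq_mul] using this
    have : t * cost p ≤ t * cost q := by linarith
    exact le_of_mul_le_mul_left this ht0
end
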